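/- Let f = h + ḡ be a locally univalent orientation-preserving harmonic mapping near α with f(α) = 0, and F the harmonic Newton map. Then the second Wirtinger derivative ∂²F/∂z² at α equals J_z(α)/J(α) = P_H(f)(α) = h''(α)/h'(α) − conj(ω(α))ω'(α)/(1 − |ω(α)|²), where ω = g'/h' is the dilatation. -/

import Mathlib

open Complex ComplexConjugate

/-- The Wirtinger derivative `∂f/∂z = (1/2)(∂f/∂x - i ∂f/∂y)`. -/
noncomputable def wirtingerZ (f : ℂ → ℂ) (z : ℂ) : ℂ :=
  (fderiv ℝ f z 1 - Complex.I * fderiv ℝ f z Complex.I) / 2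

/-- The Jacobian `J = |h'|² - |g'|²` of the harmonic map `f = h + conj g`. -/
noncomputable def jac (h g : ℂ → ℂ) (z : ℂ) : ℝ :=
  ‖deriv h z‖ ^ 2 - ‖deriv g z‖ ^ 2

/-- The Jacobian, viewed as a complex-valued function. -/
noncomputable def jacC (h g : ℂ → ℂ) (z : ℂ) : ℂ := (jac h g z : ℂ)

/-- The harmonic pre-Schwarzian derivative `P_H(f) = ∂_z log J` of `f = h + conj g`. -/
noncomputable def preSchwarzianH (h g : ℂ → ℂ) (z : ℂ) : ℂ :=
  wirtingerZ (fun w => (Real.log (jac h g w) : ℂ)) z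

/-- The harmonic Schwarzian derivative `S_H(f) = ∂_z(P_H(f)) - (1/2)(P_H(f))²`. -/
noncomputable def schwarzianH (h g : ℂ → ℂ) (z : ℂ) : ℂ :=
  wirtingerZ (preSchwarzianH h g) z - (1 / 2) * (preSchwarzianH h g z) ^ 2

/-- The classical Schwarzian derivative `S(h) = h'''/h' - (3/2)(h''/h')²`. -/
noncomputable def schwarzian (φ : ℂ → ℂ) (z : ℂ) : ℂ :=
  deriv (deriv (deriv φ)) z / deriv φ z - (3 / 2) * (deriv (deriv φ) z / deriv φ z) ^ 2

/-- The harmonic map `f = h + conj g`. -/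
noncomputable def harm (h g : ℂ → ℂ) (z : ℂ) : ℂ := h z + conj (g z)

/-- `N(z) = conj(h'(z)) f(z) - conj(g'(z) f(z))` for `f = h + conj g`. -/
noncomputable def Nmap (h g : ℂ → ℂ) (z : ℂ) : ℂ :=
  conj (deriv h z) * harm h g z - conj (deriv g z * harm h g z)

/-- The harmonic Newton map `F(z) = z - N(z)/J(z)`. -/
noncomputable def newtonMapH (h g : ℂ → ℂ) (z : ℂ) : ℂ :=
  z - Nmap h g z / jacC h g z

/-- The numerator `A` of the harmonic Halley correction. -/
noncomputable def Amap (h g : ℂ → ℂ) (z : ℂ) : ℂ :=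
  (conj (deriv h z) - conj (deriv (deriv h) z) / 2 * (conj (Nmap h g z) / jacC h g z)) *
      harm h g z -
    (conj (deriv g z) - conj (deriv (deriv g) z) / 2 * (conj (Nmap h g z) / jacC h g z)) *
      conj (harm h g z)

/-- The denominator `B` of the harmonic Halley correction. -/
noncomputable def Bmap (h g : ℂ → ℂ) (z : ℂ) : ℂ :=
  ((‖deriv h z - deriv (deriv h) z / 2 * (Nmap h g z / jacC h g z)‖ ^ 2 -
      ‖deriv g z - deriv (deriv g) z / 2 * (Nmap h g z / jacC h g z)‖ ^ 2 : ℝ) : ℂ)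

/-- The harmonic Halley map `F(z) = z - A(z)/B(z)`. -/
noncomputable def halleyMapH (h g : ℂ → ℂ) (z : ℂ) : ℂ :=
  z - Amap h g z / Bmap h g z

-- wirtinger calculus
lemma wirtingerZ_congr {f₁ f₂ : ℂ → ℂ} {z : ℂ} (h : f₁ =ᶠ[nhds z] f₂) :
    wirtingerZ f₁ z = wirtingerZ f₂ z := by
  unfold wirtingerZ; rw [h.fderiv_eq]

lemma wirtingerZ_add {f g : ℂ → ℂ} {z : ℂ} (hf : DifferentiableAt ℝ f z)
    (hg : DifferentiableAt ℝ g z) :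
    wirtingerZ (fun w => f w + g w) z = wirtingerZ f z + wirtingerZ g z := by
  unfold wirtingerZ
  rw [fderiv_fun_add hf hg]
  simp only [ContinuousLinearMap.add_apply]
  ring

lemma wirtingerZ_sub {f g : ℂ → ℂ} {z : ℂ} (hf : DifferentiableAt ℝ f z)
    (hg : DifferentiableAt ℝ g z) :
    wirtingerZ (fun w => f w - g w) z = wirtingerZ f z - wirtingerZ g z := by
  unfold wirtingerZ
  rw [fderiv_fun_sub hf hg]
  simp only [ContinuousLinearMap.sub_apply]
  ring

lemma wirtingerZ_mul {f g : ℂ → ℂ} {z : ℂ} (hf : DifferentiableAt ℝ f z)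
    (hg : DifferentiableAt ℝ g z) :
    wirtingerZ (fun w => f w * g w) z = f z * wirtingerZ g z + g z * wirtingerZ f z := by
  unfold wirtingerZ
  rw [fderiv_fun_mul hf hg]
  simp only [ContinuousLinearMap.add_apply, ContinuousLinearMap.smul_apply, smul_eq_mul]
  ring

lemma wirtingerZ_inv {f : ℂ → ℂ} {z : ℂ} (hf : DifferentiableAt ℝ f z) (h0 : f z ≠ 0) :
    wirtingerZ (fun w => (f w)⁻¹) z = -wirtingerZ f z / (f z) ^ 2 := by
  unfold wirtingerZ
  have hcomp : fderiv ℝ (fun w => (f w)⁻¹) z =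
      (fderiv ℝ Inv.inv (f z)).comp (fderiv ℝ f z) :=
    fderiv_comp z (differentiableAt_inv h0) hf
  rw [hcomp, fderiv_inv' h0]
  simp only [ContinuousLinearMap.comp_apply, ContinuousLinearMap.neg_apply,
    ContinuousLinearMap.mulLeftRight_apply]
  field_simp
  ring

lemma wirtingerZ_holo {f : ℂ → ℂ} {z : ℂ} (hf : DifferentiableAt ℂ f z) :
    wirtingerZ f z = deriv f z := by
  unfold wirtingerZ
  rw [hf.fderiv_restrictScalars ℝ]
  simp only [ContinuousLinearMap.coe_restrictScalars']
  have hI : fderiv ℂ f z Complex.I = Complex.I * deriv f z := by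
    have : (Complex.I : ℂ) = Complex.I • (1 : ℂ) := by simp
    conv_lhs => rw [this, map_smul, smul_eq_mul, fderiv_apply_one_eq_deriv]
  rw [hI, fderiv_apply_one_eq_deriv, ← mul_assoc, Complex.I_mul_I]
  ring

lemma wirtingerZ_conj {f : ℂ → ℂ} {z : ℂ} (hf : DifferentiableAt ℂ f z) :
    wirtingerZ (fun w => conj (f w)) z = 0 := by
  unfold wirtingerZ
  have hcomp : fderiv ℝ (fun w => conj (f w)) z =
      (Complex.conjCLE : ℂ →L[ℝ] ℂ).comp (fderiv ℝ f z) := by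
    exact (Complex.conjCLE.hasFDerivAt.comp z (hf.restrictScalars ℝ).hasFDerivAt).fderiv
  rw [hcomp, hf.fderiv_restrictScalars ℝ]
  simp only [ContinuousLinearMap.comp_apply, ContinuousLinearMap.coe_restrictScalars']
  have hI : fderiv ℂ f z Complex.I = Complex.I * deriv f z := by
    have : (Complex.I : ℂ) = Complex.I • (1 : ℂ) := by simp
    conv_lhs => rw [this, map_smul, smul_eq_mul, fderiv_apply_one_eq_deriv]
  rw [hI, fderiv_apply_one_eq_deriv]
  simp only [ContinuousLinearEquiv.coe_coe, Complex.conjCLE_apply]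
  have key : Complex.I * conj (Complex.I * deriv f z) = conj (deriv f z) := by
    rw [map_mul, Complex.conj_I]
    rw [show Complex.I * (-Complex.I * conj (deriv f z)) =
      -(Complex.I * Complex.I) * conj (deriv f z) by ring, Complex.I_mul_I]
    ring
  rw [key]
  ring

lemma diffAt_conj {f : ℂ → ℂ} {z : ℂ} (hf : DifferentiableAt ℂ f z) :
    DifferentiableAt ℝ (fun w => conj (f w)) z := by
  exact (hf.restrictScalars ℝ).star

lemma alg (a b a2 b2 ca cb : ℂ) (ha : a ≠ 0) (hca : ca ≠ 0)
    (hJ : a * ca - b * cb ≠ 0) :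
    (a2 * ca - b2 * cb) / (a * ca - b * cb) =
      a2 / a - (cb / ca) * ((b2 * a - b * a2) / a ^ 2) / (1 - b / a * (cb / ca)) := by
  have h1 : 1 - b / a * (cb / ca) = (a * ca - b * cb) / (a * ca) := by field_simp
  rw [h1]
  field_simp
  have hJ2 : ca * a - cb * b ≠ 0 := by
    intro h; apply hJ; linear_combination h
  rw [div_eq_iff hJ2, sub_mul _ _ (ca * a - cb * b), div_mul_cancel₀ _ hJ2]
  ring

theorem newtonMapH_second_wirtinger_deriv (h g : ℂ → ℂ) (U : Set ℂ) (hU : IsOpen U) (α : ℂ)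
    (hα : α ∈ U) (hh : DifferentiableOn ℂ h U) (hg : DifferentiableOn ℂ g U)
    (hh' : ∀ z ∈ U, deriv h z ≠ 0)
    (hω : ∀ z ∈ U, ‖deriv g z / deriv h z‖ < 1)
    (hzero : harm h g α = 0) :
    wirtingerZ (wirtingerZ (newtonMapH h g)) α = wirtingerZ (jacC h g) α / jacC h g α ∧
      wirtingerZ (jacC h g) α / jacC h g α = preSchwarzianH h g α ∧
      preSchwarzianH h g α =
        deriv (deriv h) α / deriv h α -
          conj (deriv g α / deriv h α) * deriv (fun w => deriv g w / deriv h w) α /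
            (1 - (‖deriv g α / deriv h α‖ : ℂ) ^ 2) := by
  -- analyticity and differentiability
  have hAh : AnalyticOnNhd ℂ h U := hh.analyticOnNhd hU
  have hAg : AnalyticOnNhd ℂ g U := hg.analyticOnNhd hU
  have hAh1 : AnalyticOnNhd ℂ (deriv h) U := hAh.deriv
  have hAg1 : AnalyticOnNhd ℂ (deriv g) U := hAg.deriv
  have hAh2 : AnalyticOnNhd ℂ (deriv (deriv h)) U := hAh1.deriv
  have hAg2 : AnalyticOnNhd ℂ (deriv (deriv g)) U := hAg1.deriv
  have dh : ∀ z ∈ U, DifferentiableAt ℂ h z := fun z hz => (hAh z hz).differentiableAt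
  have dg : ∀ z ∈ U, DifferentiableAt ℂ g z := fun z hz => (hAg z hz).differentiableAt
  have dh1 : ∀ z ∈ U, DifferentiableAt ℂ (deriv h) z := fun z hz => (hAh1 z hz).differentiableAt
  have dg1 : ∀ z ∈ U, DifferentiableAt ℂ (deriv g) z := fun z hz => (hAg1 z hz).differentiableAt
  have dh2 : ∀ z ∈ U, DifferentiableAt ℂ (deriv (deriv h)) z :=
    fun z hz => (hAh2 z hz).differentiableAt
  have dg2 : ∀ z ∈ U, DifferentiableAt ℂ (deriv (deriv g)) z :=
    fun z hz => (hAg2 z hz).differentiableAt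
  -- positivity of the Jacobian
  have hJpos : ∀ z ∈ U, 0 < jac h g z := by
    intro z hz
    have h0 : ‖deriv h z‖ > 0 := norm_pos_iff.mpr (hh' z hz)
    have hlt : ‖deriv g z‖ < ‖deriv h z‖ := by
      have := hω z hz
      rw [norm_div, div_lt_one h0] at this
      exact this
    have : ‖deriv g z‖ ^ 2 < ‖deriv h z‖ ^ 2 := by
      apply pow_lt_pow_left₀ hlt (norm_nonneg _)
      norm_num
    simpa [jac] using sub_pos.mpr this
  have hJne : ∀ z ∈ U, jacC h g z ≠ 0 := by
    intro z hz
    simp only [jacC, ne_eq, Complex.ofReal_eq_zero]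
    exact ne_of_gt (hJpos z hz)
  -- function rewrites
  have hJf : jacC h g = fun z => deriv h z * conj (deriv h z) - deriv g z * conj (deriv g z) := by
    funext z
    simp only [jacC, jac, Complex.sq_norm, Complex.mul_conj]
    push_cast
    ring
  have hNf : Nmap h g = fun z =>
      conj (deriv h z) * (h z + conj (g z)) - conj (deriv g z) * (conj (h z) + g z) := by
    funext z
    simp [Nmap, harm, map_add, map_mul]
  -- the ∂_z of J, as a function
  set Jz : ℂ → ℂ := fun z =>
    deriv (deriv h) z * conj (deriv h z) - deriv (deriv g) z * conj (deriv g z) with hJzdef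
  -- real differentiability of pieces
  have dJ : ∀ z ∈ U, DifferentiableAt ℝ (jacC h g) z := by
    intro z hz
    rw [hJf]
    exact (((dh1 z hz).restrictScalars ℝ).mul (diffAt_conj (dh1 z hz))).sub
      (((dg1 z hz).restrictScalars ℝ).mul (diffAt_conj (dg1 z hz)))
  have dN : ∀ z ∈ U, DifferentiableAt ℝ (Nmap h g) z := by
    intro z hz
    rw [hNf]
    exact ((diffAt_conj (dh1 z hz)).mul
        (((dh z hz).restrictScalars ℝ).add (diffAt_conj (dg z hz)))).sub
      ((diffAt_conj (dg1 z hz)).mul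
        ((diffAt_conj (dh z hz)).add ((dg z hz).restrictScalars ℝ)))
  have dJz : ∀ z ∈ U, DifferentiableAt ℝ Jz z := by
    intro z hz
    exact (((dh2 z hz).restrictScalars ℝ).mul (diffAt_conj (dh1 z hz))).sub
      (((dg2 z hz).restrictScalars ℝ).mul (diffAt_conj (dg1 z hz)))
  -- wirtinger values on U
  have wN : ∀ z ∈ U, wirtingerZ (Nmap h g) z = jacC h g z := by
    intro z hz
    rw [hNf]
    rw [wirtingerZ_sub
      ((diffAt_conj (dh1 z hz)).fun_mul
        (((dh z hz).restrictScalars ℝ).fun_add (diffAt_conj (dg z hz))))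
      ((diffAt_conj (dg1 z hz)).fun_mul
        ((diffAt_conj (dh z hz)).fun_add ((dg z hz).restrictScalars ℝ)))]
    rw [wirtingerZ_mul (diffAt_conj (dh1 z hz))
      (((dh z hz).restrictScalars ℝ).fun_add (diffAt_conj (dg z hz)))]
    rw [wirtingerZ_mul (diffAt_conj (dg1 z hz))
      ((diffAt_conj (dh z hz)).fun_add ((dg z hz).restrictScalars ℝ))]
    rw [wirtingerZ_add ((dh z hz).restrictScalars ℝ) (diffAt_conj (dg z hz))]
    rw [wirtingerZ_add (diffAt_conj (dh z hz)) ((dg z hz).restrictScalars ℝ)]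
    rw [wirtingerZ_conj (dh1 z hz), wirtingerZ_conj (dg1 z hz), wirtingerZ_conj (dh z hz),
      wirtingerZ_conj (dg z hz), wirtingerZ_holo (dh z hz), wirtingerZ_holo (dg z hz)]
    rw [hJf]
    ring
  have wJ : ∀ z ∈ U, wirtingerZ (jacC h g) z = Jz z := by
    intro z hz
    rw [hJf]
    rw [wirtingerZ_sub (((dh1 z hz).restrictScalars ℝ).fun_mul (diffAt_conj (dh1 z hz)))
      (((dg1 z hz).restrictScalars ℝ).fun_mul (diffAt_conj (dg1 z hz)))]
    rw [wirtingerZ_mul ((dh1 z hz).restrictScalars ℝ) (diffAt_conj (dh1 z hz))]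
    rw [wirtingerZ_mul ((dg1 z hz).restrictScalars ℝ) (diffAt_conj (dg1 z hz))]
    rw [wirtingerZ_conj (dh1 z hz), wirtingerZ_conj (dg1 z hz), wirtingerZ_holo (dh1 z hz),
      wirtingerZ_holo (dg1 z hz)]
    ring
  -- first wirtinger derivative of the Newton map on U
  have stepA : ∀ z ∈ U, wirtingerZ (newtonMapH h g) z =
      (Nmap h g z * Jz z) * (jacC h g z * jacC h g z)⁻¹ := by
    intro z hz
    have hform : newtonMapH h g = fun w => w - Nmap h g w * (jacC h g w)⁻¹ := by
      funext w
      simp [newtonMapH, div_eq_mul_inv]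
    rw [hform]
    have dJi : DifferentiableAt ℝ (fun w => (jacC h g w)⁻¹) z := (dJ z hz).inv (hJne z hz)
    rw [wirtingerZ_sub (differentiableAt_fun_id : DifferentiableAt ℝ (fun w => w) z) ((dN z hz).fun_mul dJi)]
    rw [wirtingerZ_mul (dN z hz) dJi]
    rw [wirtingerZ_inv (dJ z hz) (hJne z hz)]
    rw [wN z hz, wJ z hz]
    have hid : wirtingerZ (fun w => w) z = 1 := by
      rw [wirtingerZ_holo (differentiableAt_fun_id : DifferentiableAt ℂ (fun w => w) z)]
      simp
    rw [hid]
    have hJ0 := hJne z hz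
    field_simp
    ring
  -- N(α) = 0
  have hN0 : Nmap h g α = 0 := by simp [Nmap, hzero]
  -- equality 1
  have eq1 : wirtingerZ (wirtingerZ (newtonMapH h g)) α =
      wirtingerZ (jacC h g) α / jacC h g α := by
    have hev : wirtingerZ (newtonMapH h g) =ᶠ[nhds α]
        fun z => (Nmap h g z * Jz z) * (jacC h g z * jacC h g z)⁻¹ :=
      Filter.eventuallyEq_of_mem (hU.mem_nhds hα) (fun z hz => stepA z hz)
    rw [wirtingerZ_congr hev]
    have dP : DifferentiableAt ℝ (fun z => Nmap h g z * Jz z) α := (dN α hα).mul (dJz α hα)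
    have dJJ : DifferentiableAt ℝ (fun z => jacC h g z * jacC h g z) α :=
      (dJ α hα).mul (dJ α hα)
    have hJJ0 : jacC h g α * jacC h g α ≠ 0 := mul_ne_zero (hJne α hα) (hJne α hα)
    have dQ : DifferentiableAt ℝ (fun z => (jacC h g z * jacC h g z)⁻¹) α := dJJ.inv hJJ0
    rw [wirtingerZ_mul dP dQ]
    rw [wirtingerZ_mul (dN α hα) (dJz α hα)]
    rw [wN α hα, wJ α hα, hN0]
    have hJ0 := hJne α hα
    field_simp
    ring
  -- equality 2
  have eq2 : wirtingerZ (jacC h g) α / jacC h g α = preSchwarzianH h g α := by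
    have hjacR : DifferentiableAt ℝ (jac h g) α := by
      have hre : jac h g = fun z => (jacC h g z).re := by
        funext z; simp [jacC]
      rw [hre]
      exact (Complex.reCLM.differentiableAt).comp α (dJ α hα)
    have hfd : fderiv ℝ (jacC h g) α = Complex.ofRealCLM.comp (fderiv ℝ (jac h g) α) := by
      exact (Complex.ofRealCLM.hasFDerivAt.comp α hjacR.hasFDerivAt).fderiv
    have hlog : HasFDerivAt (fun w => ((Real.log (jac h g w) : ℝ) : ℂ))
        (Complex.ofRealCLM.comp
          ((ContinuousLinearMap.smulRight (1 : ℝ →L[ℝ] ℝ) (jac h g α)⁻¹).comp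
            (fderiv ℝ (jac h g) α))) α := by
      have h1 : HasFDerivAt Real.log
          (ContinuousLinearMap.smulRight (1 : ℝ →L[ℝ] ℝ) (jac h g α)⁻¹) (jac h g α) :=
        (Real.hasDerivAt_log (ne_of_gt (hJpos α hα))).hasFDerivAt
      have h2 := h1.comp α (hjacR.hasFDerivAt)
      exact Complex.ofRealCLM.hasFDerivAt.comp α h2
    unfold preSchwarzianH wirtingerZ
    rw [hlog.fderiv, hfd]
    simp only [ContinuousLinearMap.comp_apply, ContinuousLinearMap.smulRight_apply,
      ContinuousLinearMap.one_apply, smul_eq_mul, Complex.ofRealCLM_apply]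
    have hJ0 : (jac h g α : ℂ) ≠ 0 := by
      simp only [ne_eq, Complex.ofReal_eq_zero]
      exact ne_of_gt (hJpos α hα)
    rw [jacC]
    push_cast
    field_simp
  -- equality 3
  have eq3 : preSchwarzianH h g α =
      deriv (deriv h) α / deriv h α -
        conj (deriv g α / deriv h α) * deriv (fun w => deriv g w / deriv h w) α /
          (1 - (‖deriv g α / deriv h α‖ : ℂ) ^ 2) := by
    rw [← eq2, wJ α hα]
    have hderiv : deriv (fun w => deriv g w / deriv h w) α =
        (deriv (deriv g) α * deriv h α - deriv g α * deriv (deriv h) α) / (deriv h α) ^ 2 :=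
      deriv_div (dg1 α hα) (dh1 α hα) (hh' α hα)
    have habs : ((‖deriv g α / deriv h α‖ : ℝ) : ℂ) ^ 2 =
        (deriv g α / deriv h α) * conj (deriv g α / deriv h α) := by
      rw [← Complex.ofReal_pow, Complex.sq_norm, Complex.mul_conj]
    have hh0 : deriv h α ≠ 0 := hh' α hα
    have hc0 : conj (deriv h α) ≠ 0 := by simpa using hh0
    have hJval : jacC h g α = deriv h α * conj (deriv h α) - deriv g α * conj (deriv g α) := by
      simpa using congrFun hJf α
    have hJ' : deriv h α * conj (deriv h α) - deriv g α * conj (deriv g α) ≠ 0 := by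
      rw [← hJval]; exact hJne α hα
    have hJzval : Jz α = deriv (deriv h) α * conj (deriv h α) -
        deriv (deriv g) α * conj (deriv g α) := rfl
    rw [hJzval, hJval, hderiv, habs, map_div₀]
    exact alg _ _ _ _ _ _ hh0 hc0 hJ'
  exact ⟨eq1, eq2, eq3⟩
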